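/- Indirect qualitative attribution influence: let X₁,…,Xₙ (n ≥ 3) form the unique path from X₁ to Xₙ in an acyclic QBAF, with edge set S = {(X₁,X₂),…,(X_{n−1},Xₙ)} ⊆ ℛ⁻ ∪ ℛ⁺, and let Θ = |S ∩ ℛ⁻| be the number of attack edges on the path. If Θ is odd then ∇|_{X₁→Xₙ} ≤ 0; if Θ is even then ∇|_{X₁→Xₙ} ≥ 0. -/

import Mathlib

open scoped BigOperators
attribute [local instance] Classical.propDecidable

/-- The DF-QuAD combination function: given base score `t`, aggregated attacker
strength `va` and aggregated supporter strength `vs`, return the strength. -/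
noncomputable def dfquad (t va vs : ℝ) : ℝ :=
  if vs ≤ va then t - t * (va - vs) else t + (1 - t) * (vs - va)

/-- A (finite, acyclic) quantitative bipolar argumentation framework. -/
structure QBAF (V : Type) [Fintype V] where
  att : V → V → Prop
  sup : V → V → Prop
  disjoint : ∀ x y, ¬ (att x y ∧ sup x y)
  acyclic : WellFounded (fun x y => att x y ∨ sup x y)

namespace QBAF

variable {V : Type} [Fintype V]

/-- Aggregated attacker strength `v_Aa = 1 - ∏ (1 - σ X)` over attackers `X` of `A`. -/
noncomputable def vatt (Q : QBAF V) (σ : V → ℝ) (A : V) : ℝ :=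
  1 - ∏ x ∈ Finset.univ.filter (fun x => Q.att x A), (1 - σ x)

/-- Aggregated supporter strength `v_As = 1 - ∏ (1 - σ X)` over supporters `X` of `A`. -/
noncomputable def vsup (Q : QBAF V) (σ : V → ℝ) (A : V) : ℝ :=
  1 - ∏ x ∈ Finset.univ.filter (fun x => Q.sup x A), (1 - σ x)

/-- `σ` is the DF-QuAD strength function for base scores `τ`. -/
def IsStrength (Q : QBAF V) (τ σ : V → ℝ) : Prop :=
  ∀ A, σ A = dfquad (τ A) (Q.vatt σ A) (Q.vsup σ A)

/-- The edge relation of the QBAF graph. -/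
def edge (Q : QBAF V) (x y : V) : Prop := Q.att x y ∨ Q.sup x y

/-- `l` is a (directed) path from `B` to `A` in the QBAF graph. -/
def IsPathFrom (Q : QBAF V) (B A : V) (l : List V) : Prop :=
  2 ≤ l.length ∧ l.Chain' Q.edge ∧ l.head? = some B ∧ l.getLast? = some A

end QBAF

/-- The argument attribution explanation (AAE) `∇|_{B ↦ A}`: the derivative of the
strength of `A` with respect to the base score of `B`, where `σf τ'` denotes the
DF-QuAD strength function for base scores `τ'`. -/
noncomputable def AAE {V : Type} [Fintype V] (Q : QBAF V)
    (σf : (V → ℝ) → V → ℝ) (τ : V → ℝ) (B A : V) : ℝ :=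
  deriv (fun δ => σf (Function.update τ B δ) A) (τ B)

/-!
Changing `τ (X 0)` only affects the descendants of `X 0`. Since `X 0, …, X (n-1)` is the unique
path, no parent of `X (j+1)` other than `X j` descends from `X 0`, so the strength of `X (j+1)` is
a function of the strength of `X j` alone: DF-QuAD is antitone in the attacker aggregate and
monotone in the supporter aggregate, and each aggregate is monotone in each of its arguments, so
this function is antitone across an attack and monotone across a support. Hence `σ (X (n-1))` is
monotone or antitone in `τ (X 0)` according to the parity of the number of attacks, and the
derivative has the corresponding sign (it is `0` where it does not exist).
-/

open Set Relation Function

lemma one_sub_prod_one_sub_mem_Icc {ι : Type*} {s : Finset ι} {f : ι → ℝ}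
    (h : ∀ i ∈ s, f i ∈ Icc (0 : ℝ) 1) : 1 - ∏ i ∈ s, (1 - f i) ∈ Icc (0 : ℝ) 1 := by
  have h0 : 0 ≤ ∏ i ∈ s, (1 - f i) := Finset.prod_nonneg fun i hi => sub_nonneg.2 (h i hi).2
  have h1 : ∏ i ∈ s, (1 - f i) ≤ 1 :=
    Finset.prod_le_one (fun i hi => sub_nonneg.2 (h i hi).2) fun i hi => by linarith [(h i hi).1]
  constructor <;> linarith

lemma one_sub_prod_one_sub_eq_of_mem {ι : Type*} [DecidableEq ι] {s : Finset ι} {p : ι}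
    (hp : p ∈ s) {f g : ι → ℝ} (h : ∀ i ∈ s, i ≠ p → f i = g i) :
    1 - ∏ i ∈ s, (1 - f i) = 1 - (1 - f p) * ∏ i ∈ s.erase p, (1 - g i) := by
  rw [← Finset.mul_prod_erase s _ hp]
  congr 2
  exact Finset.prod_congr rfl fun i hi => by
    rw [h i (Finset.mem_of_mem_erase hi) (Finset.ne_of_mem_erase hi)]

section DFQuAD

variable {t va vs : ℝ}

lemma dfquad_mem_Icc (ht : t ∈ Icc (0 : ℝ) 1) (hva : va ∈ Icc (0 : ℝ) 1)
    (hvs : vs ∈ Icc (0 : ℝ) 1) : dfquad t va vs ∈ Icc (0 : ℝ) 1 := by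
  obtain ⟨ht0, ht1⟩ := ht
  obtain ⟨hva0, hva1⟩ := hva
  obtain ⟨hvs0, hvs1⟩ := hvs
  unfold dfquad
  split <;> constructor <;> nlinarith

lemma monotone_dfquad_base (hva : va ∈ Icc (0 : ℝ) 1) (hvs : vs ∈ Icc (0 : ℝ) 1) :
    Monotone fun t => dfquad t va vs := by
  intro t₁ t₂ h
  obtain ⟨hva0, hva1⟩ := hva
  obtain ⟨hvs0, hvs1⟩ := hvs
  simp only [dfquad]
  split <;> nlinarith

lemma antitone_dfquad_att (ht : t ∈ Icc (0 : ℝ) 1) : Antitone fun va => dfquad t va vs := by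
  intro a b h
  obtain ⟨ht0, ht1⟩ := ht
  simp only [dfquad]
  split_ifs <;> nlinarith

lemma monotone_dfquad_sup (ht : t ∈ Icc (0 : ℝ) 1) : Monotone fun vs => dfquad t va vs := by
  intro a b h
  obtain ⟨ht0, ht1⟩ := ht
  simp only [dfquad]
  split_ifs <;> nlinarith

end DFQuAD

namespace QBAF

variable {V : Type} [Fintype V] {Q : QBAF V}

lemma not_reflTransGen_of_edge {x y : V} (h : Q.edge x y) : ¬ ReflTransGen Q.edge y x :=
  fun hyx => Q.acyclic.transGen.irrefl.irrefl y (TransGen.tail' hyx h)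

lemma vatt_congr {σ₁ σ₂ : V → ℝ} {A : V} (h : ∀ x, Q.att x A → σ₁ x = σ₂ x) :
    Q.vatt σ₁ A = Q.vatt σ₂ A := by
  unfold vatt
  congr 1
  exact Finset.prod_congr rfl fun x hx => by rw [h x (Finset.mem_filter.1 hx).2]

lemma vsup_congr {σ₁ σ₂ : V → ℝ} {A : V} (h : ∀ x, Q.sup x A → σ₁ x = σ₂ x) :
    Q.vsup σ₁ A = Q.vsup σ₂ A := by
  unfold vsup
  congr 1
  exact Finset.prod_congr rfl fun x hx => by rw [h x (Finset.mem_filter.1 hx).2]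

lemma vatt_mem_Icc {σ : V → ℝ} {A : V} (h : ∀ x, Q.att x A → σ x ∈ Icc (0 : ℝ) 1) :
    Q.vatt σ A ∈ Icc (0 : ℝ) 1 :=
  one_sub_prod_one_sub_mem_Icc fun x hx => h x (Finset.mem_filter.1 hx).2

lemma vsup_mem_Icc {σ : V → ℝ} {A : V} (h : ∀ x, Q.sup x A → σ x ∈ Icc (0 : ℝ) 1) :
    Q.vsup σ A ∈ Icc (0 : ℝ) 1 :=
  one_sub_prod_one_sub_mem_Icc fun x hx => h x (Finset.mem_filter.1 hx).2

section Strength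

variable {τ σ : V → ℝ}

theorem IsStrength.mem_Icc (hσ : Q.IsStrength τ σ) (hτ : ∀ x, τ x ∈ Icc (0 : ℝ) 1) (x : V) :
    σ x ∈ Icc (0 : ℝ) 1 := by
  induction x using Q.acyclic.induction with
  | _ x ih =>
    rw [hσ x]
    exact dfquad_mem_Icc (hτ x) (vatt_mem_Icc fun y hy => ih y (Or.inl hy))
      (vsup_mem_Icc fun y hy => ih y (Or.inr hy))

theorem IsStrength.eq_of_forall_ancestor {τ' σ' : V → ℝ} (hσ : Q.IsStrength τ σ)
    (hσ' : Q.IsStrength τ' σ') {x : V} (h : ∀ y, ReflTransGen Q.edge y x → τ y = τ' y) :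
    σ x = σ' x := by
  induction x using Q.acyclic.induction with
  | _ x ih =>
    rw [hσ x, hσ' x, h x .refl,
      vatt_congr fun z hz => ih z (Or.inl hz) fun y hy => h y (hy.tail (Or.inl hz)),
      vsup_congr fun z hz => ih z (Or.inr hz) fun y hy => h y (hy.tail (Or.inr hz))]

variable {σ' : V → ℝ} {B : V} {δ : ℝ}

theorem IsStrength.update_eq_of_not_reflTransGen (hσ : Q.IsStrength τ σ)
    (hσ' : Q.IsStrength (update τ B δ) σ') {x : V} (hx : ¬ ReflTransGen Q.edge B x) :
    σ' x = σ x :=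
  hσ'.eq_of_forall_ancestor hσ fun y hy => update_of_ne (by rintro rfl; exact hx hy) _ _

theorem IsStrength.update_self_eq (hσ : Q.IsStrength τ σ) (hσ' : Q.IsStrength (update τ B δ) σ') :
    σ' B = dfquad δ (Q.vatt σ B) (Q.vsup σ B) := by
  rw [hσ' B, update_self,
    vatt_congr fun z hz => hσ.update_eq_of_not_reflTransGen hσ'
      (not_reflTransGen_of_edge (Or.inl hz)),
    vsup_congr fun z hz => hσ.update_eq_of_not_reflTransGen hσ'
      (not_reflTransGen_of_edge (Or.inr hz))]

end Strength

section SingleVaryingParent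

variable {ι : Type*} {τ σ : ι → V → ℝ} (hσ : ∀ i, Q.IsStrength (τ i) (σ i)) {σ₀ : V → ℝ}
  (hσ₀ : ∀ x, σ₀ x ≤ 1) {P A : V} {t : ℝ} (hτ : ∀ i, τ i A = t) (ht : t ∈ Icc (0 : ℝ) 1)
  (hfix : ∀ z, Q.edge z A → z ≠ P → ∀ i, σ i z = σ₀ z)
include hσ hσ₀ hτ ht hfix

theorem exists_antitone_of_att (hPA : Q.att P A) :
    ∃ φ : ℝ → ℝ, Antitone φ ∧ (fun i => σ i A) = φ ∘ fun i => σ i P := by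
  set C := ∏ z ∈ (Finset.univ.filter fun z => Q.att z A).erase P, (1 - σ₀ z)
  have hC : 0 ≤ C := Finset.prod_nonneg fun z _ => sub_nonneg.2 (hσ₀ z)
  refine ⟨fun x => dfquad t (1 - (1 - x) * C) (Q.vsup σ₀ A),
    (antitone_dfquad_att ht).comp_monotone fun x y hxy => by nlinarith, funext fun i => ?_⟩
  have hva : Q.vatt (σ i) A = 1 - (1 - σ i P) * C :=
    one_sub_prod_one_sub_eq_of_mem (by simpa using hPA) fun z hz hzP =>
      hfix z (Or.inl (Finset.mem_filter.1 hz).2) hzP i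
  have hvs : Q.vsup (σ i) A = Q.vsup σ₀ A :=
    vsup_congr fun z hz => hfix z (Or.inr hz) (by rintro rfl; exact Q.disjoint z A ⟨hPA, hz⟩) i
  rw [comp_apply, hσ i A, hτ i, hva, hvs]

theorem exists_monotone_of_sup (hPA : Q.sup P A) :
    ∃ φ : ℝ → ℝ, Monotone φ ∧ (fun i => σ i A) = φ ∘ fun i => σ i P := by
  set C := ∏ z ∈ (Finset.univ.filter fun z => Q.sup z A).erase P, (1 - σ₀ z)
  have hC : 0 ≤ C := Finset.prod_nonneg fun z _ => sub_nonneg.2 (hσ₀ z)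
  refine ⟨fun x => dfquad t (Q.vatt σ₀ A) (1 - (1 - x) * C),
    (monotone_dfquad_sup ht).comp fun x y hxy => by nlinarith, funext fun i => ?_⟩
  have hvs : Q.vsup (σ i) A = 1 - (1 - σ i P) * C :=
    one_sub_prod_one_sub_eq_of_mem (by simpa using hPA) fun z hz hzP =>
      hfix z (Or.inr (Finset.mem_filter.1 hz).2) hzP i
  have hva : Q.vatt (σ i) A = Q.vatt σ₀ A :=
    vatt_congr fun z hz => hfix z (Or.inl hz) (by rintro rfl; exact Q.disjoint z A ⟨hz, hPA⟩) i
  rw [comp_apply, hσ i A, hτ i, hva, hvs]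

end SingleVaryingParent

theorem IsPathFrom.getLast?_eq_of_unique {a b c y : V} {l l₁ l₂ : List V}
    (hl : l = l₁ ++ c :: l₂) (hpath : Q.IsPathFrom a b l)
    (huniq : ∀ l', Q.IsPathFrom a b l' → l' = l) (hy : Q.edge y c)
    (hreach : ReflTransGen Q.edge a y) : l₁.getLast? = some y := by
  subst hl
  obtain ⟨p, hpch, hplast⟩ := List.exists_isChain_cons_of_relationReflTransGen hreach
  have hnew : Q.IsPathFrom a b ((a :: p) ++ c :: l₂) := by
    refine ⟨by simp; omega, hpch.append (List.isChain_append.1 hpath.2.1).2.1 ?_, by simp, ?_⟩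
    · rw [List.getLast?_eq_some_getLast (List.cons_ne_nil a p), hplast]
      simpa using hy
    · have hlast := hpath.2.2.2
      rw [List.getLast?_append_of_ne_nil _ (List.cons_ne_nil c l₂)] at hlast ⊢
      exact hlast
  rw [← List.append_cancel_right (huniq _ hnew),
    List.getLast?_eq_some_getLast (List.cons_ne_nil a p), hplast]

variable {n : ℕ} {X : ℕ → V}

lemma edge_of_chain (h : ((List.range n).map X).IsChain Q.edge) {i : ℕ} (hi : i + 1 < n) :
    Q.edge (X i) (X (i + 1)) :=
  (List.isChain_range _ n).1 ((List.isChain_map X).1 h) i (by omega)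

lemma reflTransGen_of_chain (h : ((List.range n).map X).IsChain Q.edge) {j : ℕ} (hj : j < n) :
    ReflTransGen Q.edge (X 0) (X j) := by
  induction j with
  | zero => exact .refl
  | succ k ih => exact (ih (by omega)).tail (edge_of_chain h hj)

noncomputable def attacksAlong (Q : QBAF V) (X : ℕ → V) (j : ℕ) : ℕ :=
  ((Finset.range j).filter fun i => Q.att (X i) (X (i + 1))).card

lemma attacksAlong_succ (j : ℕ) : Q.attacksAlong X (j + 1) =
    Q.attacksAlong X j + if Q.att (X j) (X (j + 1)) then 1 else 0 := by
  simp only [attacksAlong, Finset.card_filter, Finset.sum_range_succ]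

section UniquePath

variable (hpath : Q.IsPathFrom (X 0) (X (n - 1)) ((List.range n).map X))
  (huniq : ∀ l, Q.IsPathFrom (X 0) (X (n - 1)) l → l = (List.range n).map X)
include hpath huniq

theorem eq_of_edge_of_unique_path {j : ℕ} (hj : j + 1 < n) {y : V} (hy : Q.edge y (X (j + 1)))
    (hreach : ReflTransGen Q.edge (X 0) y) : y = X j := by
  set l := (List.range n).map X
  have hsplit : l = l.take (j + 1) ++ X (j + 1) :: l.drop (j + 2) := by
    rw [show X (j + 1) = l[j + 1]'(by simpa [l]) by simp [l], List.getElem_cons_drop,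
      List.take_append_drop]
  have := IsPathFrom.getLast?_eq_of_unique hsplit hpath huniq hy hreach
  simpa [l, List.getLast?_take, List.getElem?_range, show j < n by omega, eq_comm] using this

theorem parity_monotone_along_unique_path {σf : (V → ℝ) → V → ℝ}
    (hσ : ∀ τ, Q.IsStrength τ (σf τ)) {τ : V → ℝ} (hτ : ∀ x, τ x ∈ Icc (0 : ℝ) 1) {j : ℕ}
    (hj : j < n) :
    (Even (Q.attacksAlong X j) → Monotone fun δ => σf (update τ (X 0) δ) (X j)) ∧
      (Odd (Q.attacksAlong X j) → Antitone fun δ => σf (update τ (X 0) δ) (X j)) := by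
  induction j with
  | zero =>
    refine ⟨fun _ => ?_, by simp [attacksAlong]⟩
    have hσ₀ := (hσ τ).mem_Icc hτ
    simpa only [(hσ τ).update_self_eq (hσ _)] using
      monotone_dfquad_base (vatt_mem_Icc fun x _ => hσ₀ x) (vsup_mem_Icc fun x _ => hσ₀ x)
  | succ k ih =>
    obtain ⟨ihEven, ihOdd⟩ := ih (by omega)
    have hne : X (k + 1) ≠ X 0 := fun h => not_reflTransGen_of_edge
      (h ▸ edge_of_chain hpath.2.1 hj) (reflTransGen_of_chain hpath.2.1 (by omega))
    have hfix : ∀ z, Q.edge z (X (k + 1)) → z ≠ X k → ∀ δ,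
        σf (update τ (X 0) δ) z = σf τ z := fun z hz hzk δ =>
      (hσ τ).update_eq_of_not_reflTransGen (hσ _)
        fun hreach => hzk (eq_of_edge_of_unique_path hpath huniq hj hz hreach)
    have hσ₀ : ∀ x, σf τ x ≤ 1 := fun x => ((hσ τ).mem_Icc hτ x).2
    have hτk : ∀ δ, update τ (X 0) δ (X (k + 1)) = τ (X (k + 1)) := fun δ => update_of_ne hne _ _
    rw [attacksAlong_succ]
    rcases edge_of_chain hpath.2.1 hj with hatt | hsup
    · obtain ⟨φ, hφ, hfac⟩ := exists_antitone_of_att (fun δ => hσ _) hσ₀ hτk (hτ _) hfix hatt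
      simp only [if_pos hatt, Nat.even_add_one, Nat.odd_add_one, Nat.not_even_iff_odd,
        Nat.not_odd_iff_even, hfac]
      exact ⟨fun h => hφ.comp (ihOdd h), fun h => hφ.comp_monotone (ihEven h)⟩
    · have hatt : ¬ Q.att (X k) (X (k + 1)) := fun h => Q.disjoint _ _ ⟨h, hsup⟩
      obtain ⟨φ, hφ, hfac⟩ := exists_monotone_of_sup (fun δ => hσ _) hσ₀ hτk (hτ _) hfix hsup
      simp only [if_neg hatt, add_zero, hfac]
      exact ⟨fun h => hφ.comp (ihEven h), fun h => hφ.comp_antitone (ihOdd h)⟩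

end UniquePath

end QBAF

theorem indirect_qualitative_general {V : Type} [Fintype V] (Q : QBAF V)
    (σf : (V → ℝ) → V → ℝ) (hσ : ∀ τ, Q.IsStrength τ (σf τ))
    (τ : V → ℝ) (hτ : ∀ x, τ x ∈ Set.Icc (0:ℝ) 1)
    (n : ℕ) (X : ℕ → V)
    (hpath : Q.IsPathFrom (X 0) (X (n-1)) ((List.range n).map X))
    (huniq : ∀ l, Q.IsPathFrom (X 0) (X (n-1)) l → l = (List.range n).map X) :
    (Odd ((Finset.range (n-1)).filter (fun i => Q.att (X i) (X (i+1)))).card →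
        AAE Q σf τ (X 0) (X (n-1)) ≤ 0) ∧
    (Even ((Finset.range (n-1)).filter (fun i => Q.att (X i) (X (i+1)))).card →
        0 ≤ AAE Q σf τ (X 0) (X (n-1))) := by
  have hn : n - 1 < n := by
    have := hpath.1
    simp only [List.length_map, List.length_range] at this
    omega
  obtain ⟨hmono, hanti⟩ := QBAF.parity_monotone_along_unique_path hpath huniq hσ hτ hn
  exact ⟨fun h => (hanti h).deriv_nonpos, fun h => (hmono h).deriv_nonneg⟩

/-- indirect qualitative attribution influence. If `X 0, …, X (n-1)`
(`n ≥ 3`) is the unique path from `X 0` to `X (n-1)` and `Θ` is the number of attack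
edges on it, then `∇|_{X 0 ↦ X (n-1)} ≤ 0` when `Θ` is odd and `≥ 0` when `Θ` is even. -/
theorem indirect_qualitative {V : Type} [Fintype V] (Q : QBAF V)
    (σf : (V → ℝ) → V → ℝ) (hσ : ∀ τ, Q.IsStrength τ (σf τ))
    (τ : V → ℝ) (hτ : ∀ x, τ x ∈ Set.Icc (0:ℝ) 1)
    (n : ℕ) (hn : 3 ≤ n) (X : ℕ → V)
    (hpath : Q.IsPathFrom (X 0) (X (n-1)) ((List.range n).map X))
    (huniq : ∀ l, Q.IsPathFrom (X 0) (X (n-1)) l → l = (List.range n).map X) :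
    (Odd ((Finset.range (n-1)).filter (fun i => Q.att (X i) (X (i+1)))).card →
        AAE Q σf τ (X 0) (X (n-1)) ≤ 0) ∧
    (Even ((Finset.range (n-1)).filter (fun i => Q.att (X i) (X (i+1)))).card →
        0 ≤ AAE Q σf τ (X 0) (X (n-1))) :=
  indirect_qualitative_general Q σf hσ τ hτ n X hpath huniq
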